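/- arXiv:2504.10461 — 3 statements merged into one kernel-verified Lean document; each statement's English description precedes it below -/
import Mathlib

section
/- Let A_cl ∈ ℝ^{n×n} be Schur stable and λ ∈ (0, 1/2) be such that A_{cl,λ} := (1/√(1−2λ)) A_cl is also Schur stable. Let Q ⪰ 0 satisfy A_{cl,λ}ᵀ Cᵀ C A_{cl,λ} − Cᵀ C ⪯ Q, and let N be the unique positive definite solution of the discrete Lyapunov equation A_{cl,λ}ᵀ N A_{cl,λ} − N = −Q (assuming Q ≻ 0). Then M := N + Cᵀ C is positive definite, satisfies M ⪰ Cᵀ C, and satisfies A_clᵀ M A_cl − M ⪯ −2λ M. -/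
open Matrix

/-- A real square matrix is Schur stable if all of its (complex) eigenvalues
have modulus strictly less than one. -/
def SchurStable {n : ℕ} (A : Matrix (Fin n) (Fin n) ℝ) : Prop :=
  ∀ μ ∈ spectrum ℂ (A.map (Complex.ofReal)), ‖μ‖ < 1

/-!
Write `s = √(1 - 2λ)`, so that `A_cl = s • A_{cl,λ}` and `s² = 1 - 2λ`. Then
`-2λ M - (A_clᵀ M A_cl - M) = s² (M - A_{cl,λ}ᵀ M A_{cl,λ})`, and by the Lyapunov equation for `N`
the bracket equals `Q - (A_{cl,λ}ᵀ Cᵀ C A_{cl,λ} - Cᵀ C)`, which is positive semidefinite by the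
choice of `Q`.
-/

namespace Matrix

variable {ι R : Type*} [Fintype ι] [CommRing R]

theorem smul_sub_sub_lyapunov_smul (c : R) (A M : Matrix ι ι R) :
    (c ^ 2 - 1) • M - ((c • A)ᵀ * M * (c • A) - M) = c ^ 2 • (M - Aᵀ * M * A) := by
  simp only [transpose_smul, Matrix.smul_mul, Matrix.mul_smul, smul_smul]
  module

theorem add_sub_lyapunov_add_of_lyapunov {A N Q : Matrix ι ι R} (S : Matrix ι ι R)
    (hLyap : Aᵀ * N * A - N = -Q) :
    (N + S) - Aᵀ * (N + S) * A = Q - (Aᵀ * S * A - S) := by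
  have hAN : Aᵀ * N * A = N - Q := by rw [sub_eq_add_neg N Q, ← hLyap]; abel
  rw [mul_add, add_mul, hAN]
  abel

end Matrix

theorem stmt_3_general {n p : ℕ}
    (A_cl : Matrix (Fin n) (Fin n) ℝ) (C : Matrix (Fin p) (Fin n) ℝ)
    (l : ℝ) (hl : l < 1 / 2)
    (A_cll : Matrix (Fin n) (Fin n) ℝ)
    (hA_cll : A_cll = (1 / Real.sqrt (1 - 2 * l)) • A_cl)
    (Q : Matrix (Fin n) (Fin n) ℝ)
    (hQup : (Q - (A_cllᵀ * (Cᵀ * C) * A_cll - Cᵀ * C)).PosSemidef)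
    (N : Matrix (Fin n) (Fin n) ℝ) (hN : N.PosDef)
    (hLyap : A_cllᵀ * N * A_cll - N = -Q) :
    (N + Cᵀ * C).PosDef ∧
    ((N + Cᵀ * C) - Cᵀ * C).PosSemidef ∧
    ((-(2 * l)) • (N + Cᵀ * C) -
      (A_clᵀ * (N + Cᵀ * C) * A_cl - (N + Cᵀ * C))).PosSemidef := by
  have hCtC : (Cᵀ * C).PosSemidef := by simpa using posSemidef_conjTranspose_mul_self C
  refine ⟨hN.add_posSemidef hCtC, by simpa using hN.posSemidef, ?_⟩
  have hs : 0 < 1 - 2 * l := by linarith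
  have hA_cl : A_cl = √(1 - 2 * l) • A_cll := by
    rw [hA_cll, smul_smul, mul_one_div_cancel (by positivity), one_smul]
  have key := smul_sub_sub_lyapunov_smul (√(1 - 2 * l)) A_cll (N + Cᵀ * C)
  rw [Real.sq_sqrt hs.le, sub_sub_cancel_left, ← hA_cl,
    add_sub_lyapunov_add_of_lyapunov _ hLyap] at key
  rw [key]
  exact hQup.smul hs.le

/-- the Lyapunov-equation construction of `M = N + CᵀC`. -/
theorem stmt_3 {n p : ℕ}
    (A_cl : Matrix (Fin n) (Fin n) ℝ) (C : Matrix (Fin p) (Fin n) ℝ)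
    (l : ℝ) (hl0 : 0 < l) (hl : l < 1 / 2)
    (hA : SchurStable A_cl)
    (A_cll : Matrix (Fin n) (Fin n) ℝ)
    (hA_cll : A_cll = (1 / Real.sqrt (1 - 2 * l)) • A_cl)
    (hAl : SchurStable A_cll)
    (Q : Matrix (Fin n) (Fin n) ℝ) (hQ : Q.PosDef)
    (hQup : (Q - (A_cllᵀ * (Cᵀ * C) * A_cll - Cᵀ * C)).PosSemidef)
    (N : Matrix (Fin n) (Fin n) ℝ) (hN : N.PosDef)
    (hLyap : A_cllᵀ * N * A_cll - N = -Q) :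
    (N + Cᵀ * C).PosDef ∧
    ((N + Cᵀ * C) - Cᵀ * C).PosSemidef ∧
    ((-(2 * l)) • (N + Cᵀ * C) -
      (A_clᵀ * (N + Cᵀ * C) * A_cl - (N + Cᵀ * C))).PosSemidef :=
  stmt_3_general A_cl C l hl A_cll hA_cll Q hQup N hN hLyap
end

section
/- Under the hypotheses of Theorem 1, with λ ∈ (0,1/2), for all (x̄, x) and all ū: V(x̄⁺, x⁺) − V(x̄, x) ≤ −(λ/(1−λ)) (V(x̄, x) − γ²‖ū‖²), where x̄⁺, x⁺ are the one-step updates under inputs ū and u_L(ū, x̄, x) respectively. -/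
open Matrix

noncomputable def eunorm {n : ℕ} (v : Fin n → ℝ) : ℝ :=
  ‖(WithLp.equiv 2 (Fin n → ℝ)).symm v‖

/-- The old `Matrix.PosSemidef.sqrt` (removed from Mathlib), spelled out with its old definition. -/
noncomputable def posSemidefSqrt {n : ℕ} {A : Matrix (Fin n) (Fin n) ℝ} (hA : A.PosSemidef) :
    Matrix (Fin n) (Fin n) ℝ :=
  (hA.1.eigenvectorUnitary : Matrix (Fin n) (Fin n) ℝ) * diagonal (Real.sqrt ∘ hA.1.eigenvalues) *
    (star hA.1.eigenvectorUnitary : Matrix (Fin n) (Fin n) ℝ)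

noncomputable def specNorm {m n : ℕ} (A : Matrix (Fin m) (Fin n) ℝ) : ℝ :=
  ‖LinearMap.toContinuousLinearMap (Matrix.toEuclideanLin A)‖

/-!
With `e = x - P x̄`, the matching condition `P Ā_L = A_L P + B_L Q` turns the closed loop into
`e⁺ = (A_L + B_L K) e + (B_L R - P B̄_L) ū`, so `V⁺ = ‖e⁺‖²_M`. Young's inequality with weights
`1 - λ` and `λ` gives `V⁺ ≤ ‖(A_L + B_L K) e‖²_M / (1 - λ) + ‖(B_L R - P B̄_L) ū‖²_M / λ`.
The contraction inequality bounds the first term by `(1 - 2λ) V / (1 - λ)`, and factoring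
`M = M^{1/2} M^{1/2}` bounds the second by `‖M^{1/2}(B_L R - P B̄_L)‖² ‖ū‖² / λ = λ γ² ‖ū‖² / (1 - λ)`.
-/

section QuadraticForm

variable {ι : Type*} [Fintype ι] {M : Matrix ι ι ℝ}

lemma Matrix.PosSemidef.dotProduct_mulVec_comm (hM : M.PosSemidef) (a b : ι → ℝ) :
    a ⬝ᵥ M *ᵥ b = b ⬝ᵥ M *ᵥ a := by
  have hMt : Mᵀ = M := hM.1
  rw [dotProduct_mulVec, ← mulVec_transpose, hMt, dotProduct_comm]

lemma Matrix.PosSemidef.quadForm_nonneg (hM : M.PosSemidef) (v : ι → ℝ) :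
    0 ≤ v ⬝ᵥ M *ᵥ v := by
  simpa using hM.dotProduct_mulVec_nonneg v

lemma Matrix.PosSemidef.quadForm_add_le (hM : M.PosSemidef) {t : ℝ} (ht0 : 0 < t) (ht1 : t < 1)
    (a b : ι → ℝ) :
    (a + b) ⬝ᵥ M *ᵥ (a + b) ≤ (a ⬝ᵥ M *ᵥ a) / (1 - t) + (b ⬝ᵥ M *ᵥ b) / t := by
  have hsq := hM.quadForm_nonneg (t • a - (1 - t) • b)
  simp only [mulVec_add, mulVec_sub, mulVec_smul, add_dotProduct, dotProduct_add,
    sub_dotProduct, dotProduct_sub, smul_dotProduct, dotProduct_smul, smul_eq_mul] at hsq ⊢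
  rw [hM.dotProduct_mulVec_comm b a] at hsq ⊢
  have h1t : 0 < 1 - t := by linarith
  rw [div_add_div _ _ h1t.ne' ht0.ne', le_div_iff₀ (by positivity)]
  nlinarith

lemma quadForm_mulVec_le_of_posSemidef {F : Matrix ι ι ℝ} {c : ℝ}
    (h : (c • M - (Fᵀ * M * F - M)).PosSemidef) (e : ι → ℝ) :
    (F *ᵥ e) ⬝ᵥ M *ᵥ (F *ᵥ e) ≤ (1 + c) * (e ⬝ᵥ M *ᵥ e) := by
  have hF : e ⬝ᵥ (Fᵀ * M * F) *ᵥ e = (F *ᵥ e) ⬝ᵥ M *ᵥ (F *ᵥ e) := by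
    rw [← mulVec_mulVec, ← mulVec_mulVec, dotProduct_mulVec e Fᵀ, vecMul_transpose]
  have := h.quadForm_nonneg e
  simp only [sub_mulVec, smul_mulVec, dotProduct_sub, dotProduct_smul, smul_eq_mul, hF] at this
  linarith

end QuadraticForm

lemma eunorm_sq {n : ℕ} (v : Fin n → ℝ) : eunorm v ^ 2 = v ⬝ᵥ v := by
  rw [eunorm, ← real_inner_self_eq_norm_sq]
  rfl

lemma eunorm_mulVec_le {m n : ℕ} (A : Matrix (Fin m) (Fin n) ℝ) (v : Fin n → ℝ) :
    eunorm (A *ᵥ v) ≤ specNorm A * eunorm v := by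
  simpa [eunorm, specNorm, toLpLin_toLp] using
    (LinearMap.toContinuousLinearMap (toEuclideanLin A)).le_opNorm
      ((WithLp.equiv 2 (Fin n → ℝ)).symm v)

lemma posSemidefSqrt_transpose {n : ℕ} {M : Matrix (Fin n) (Fin n) ℝ} (hM : M.PosSemidef) :
    (posSemidefSqrt hM)ᵀ = posSemidefSqrt hM := by
  simp [posSemidefSqrt, transpose_mul, star_eq_conjTranspose,
    conjTranspose_eq_transpose_of_trivial, Matrix.mul_assoc]

lemma posSemidefSqrt_mul_self {n : ℕ} {M : Matrix (Fin n) (Fin n) ℝ} (hM : M.PosSemidef) :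
    posSemidefSqrt hM * posSemidefSqrt hM = M := by
  have hU : (star hM.1.eigenvectorUnitary : Matrix (Fin n) (Fin n) ℝ) *
      (hM.1.eigenvectorUnitary : Matrix (Fin n) (Fin n) ℝ) = 1 :=
    Unitary.star_mul_self_of_mem hM.1.eigenvectorUnitary.2
  have hD : diagonal (Real.sqrt ∘ hM.1.eigenvalues) * diagonal (Real.sqrt ∘ hM.1.eigenvalues)
      = diagonal (RCLike.ofReal ∘ hM.1.eigenvalues) := by
    rw [diagonal_mul_diagonal]
    congr 1
    funext i
    simp [Real.mul_self_sqrt (hM.eigenvalues_nonneg i)]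
  conv_rhs => rw [hM.1.spectral_theorem, Unitary.conjStarAlgAut_apply]
  simp only [posSemidefSqrt, Matrix.mul_assoc]
  rw [← Matrix.mul_assoc (star _ : Matrix (Fin n) (Fin n) ℝ), hU, Matrix.one_mul,
    ← Matrix.mul_assoc (diagonal _), hD]

lemma quadForm_eq_eunorm_posSemidefSqrt_sq {n : ℕ} {M : Matrix (Fin n) (Fin n) ℝ}
    (hM : M.PosSemidef) (v : Fin n → ℝ) :
    v ⬝ᵥ M *ᵥ v = eunorm (posSemidefSqrt hM *ᵥ v) ^ 2 := by
  conv_lhs => rw [← posSemidefSqrt_mul_self hM, ← mulVec_mulVec, dotProduct_mulVec,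
    ← mulVec_transpose, posSemidefSqrt_transpose]
  rw [eunorm_sq]

lemma quadForm_mulVec_le_specNorm_sq {n m : ℕ} {M : Matrix (Fin n) (Fin n) ℝ}
    (hM : M.PosSemidef) (D : Matrix (Fin n) (Fin m) ℝ) (u : Fin m → ℝ) :
    (D *ᵥ u) ⬝ᵥ M *ᵥ (D *ᵥ u) ≤ specNorm (posSemidefSqrt hM * D) ^ 2 * eunorm u ^ 2 := by
  rw [quadForm_eq_eunorm_posSemidefSqrt_sq hM, mulVec_mulVec, ← mul_pow]
  exact pow_le_pow_left₀ (norm_nonneg _) (eunorm_mulVec_le _ u) 2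

lemma tracking_error_step {α : Type*} [CommRing α] {n nb m mb : ℕ}
    {A : Matrix (Fin n) (Fin n) α} {B : Matrix (Fin n) (Fin m) α}
    {Ab : Matrix (Fin nb) (Fin nb) α} {Bb : Matrix (Fin nb) (Fin mb) α}
    {P : Matrix (Fin n) (Fin nb) α} {Q : Matrix (Fin m) (Fin nb) α}
    (hPA : P * Ab = A * P + B * Q) (K : Matrix (Fin m) (Fin n) α) (R : Matrix (Fin m) (Fin mb) α)
    (xb : Fin nb → α) (x : Fin n → α) (ub : Fin mb → α) :
    A *ᵥ x + B *ᵥ (R *ᵥ ub + Q *ᵥ xb + K *ᵥ (x - P *ᵥ xb)) - P *ᵥ (Ab *ᵥ xb + Bb *ᵥ ub) =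
      (A + B * K) *ᵥ (x - P *ᵥ xb) + (B * R - P * Bb) *ᵥ ub := by
  have hPAv : P *ᵥ (Ab *ᵥ xb) = A *ᵥ (P *ᵥ xb) + B *ᵥ (Q *ᵥ xb) := by
    rw [mulVec_mulVec, hPA, add_mulVec, ← mulVec_mulVec, ← mulVec_mulVec]
  simp only [mulVec_add, mulVec_sub, add_mulVec, sub_mulVec, ← mulVec_mulVec, hPAv]
  abel

theorem stmt_10_general {n nb m mb : ℕ}
    (A_L : Matrix (Fin n) (Fin n) ℝ) (B_L : Matrix (Fin n) (Fin m) ℝ)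
    (Ab_L : Matrix (Fin nb) (Fin nb) ℝ) (Bb_L : Matrix (Fin nb) (Fin mb) ℝ)
    (M : Matrix (Fin n) (Fin n) ℝ) (hM : M.PosDef)
    (K : Matrix (Fin m) (Fin n) ℝ) (l : ℝ) (hl0 : 0 < l) (hl : l < 1 / 2)
    (hcontr : ((-(2 * l)) • M -
      ((A_L + B_L * K)ᵀ * M * (A_L + B_L * K) - M)).PosSemidef)
    (P : Matrix (Fin n) (Fin nb) ℝ) (Q : Matrix (Fin m) (Fin nb) ℝ)
    (hPA : P * Ab_L = A_L * P + B_L * Q)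
    (R : Matrix (Fin m) (Fin mb) ℝ)
    (V : (Fin nb → ℝ) → (Fin n → ℝ) → ℝ)
    (hV : ∀ xb x, V xb x = (x - P.mulVec xb) ⬝ᵥ M.mulVec (x - P.mulVec xb))
    (u_L : (Fin mb → ℝ) → (Fin nb → ℝ) → (Fin n → ℝ) → (Fin m → ℝ))
    (hu_L : ∀ ub xb x, u_L ub xb x =
      R.mulVec ub + Q.mulVec xb + K.mulVec (x - P.mulVec xb))
    (γ : ℝ)
    (hγ : γ = Real.sqrt (1 - l) / l * specNorm (posSemidefSqrt hM.posSemidef * (B_L * R - P * Bb_L))) :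
    ∀ (xb : Fin nb → ℝ) (x : Fin n → ℝ) (ub : Fin mb → ℝ),
      V (Ab_L.mulVec xb + Bb_L.mulVec ub)
          (A_L.mulVec x + B_L.mulVec (u_L ub xb x)) - V xb x ≤
        -(l / (1 - l)) * (V xb x - γ ^ 2 * eunorm ub ^ 2) := by
  intro xb x ub
  have h1l : 0 < 1 - l := by linarith
  set e := x - P *ᵥ xb
  set F := A_L + B_L * K
  set D := B_L * R - P * Bb_L
  set N := specNorm (posSemidefSqrt hM.posSemidef * D)
  rw [hV, hV, hu_L, tracking_error_step hPA]
  have hyoung := hM.posSemidef.quadForm_add_le hl0 (by linarith) (F *ᵥ e) (D *ᵥ ub)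
  have hstate := quadForm_mulVec_le_of_posSemidef hcontr e
  have hinput := quadForm_mulVec_le_specNorm_sq hM.posSemidef D ub
  calc _ ≤ (F *ᵥ e) ⬝ᵥ M *ᵥ (F *ᵥ e) / (1 - l) + (D *ᵥ ub) ⬝ᵥ M *ᵥ (D *ᵥ ub) / l
        - e ⬝ᵥ M *ᵥ e := by gcongr
    _ ≤ (1 + -(2 * l)) * (e ⬝ᵥ M *ᵥ e) / (1 - l) + N ^ 2 * eunorm ub ^ 2 / l
        - e ⬝ᵥ M *ᵥ e := by gcongr
    _ = _ := by
      rw [hγ, mul_pow, div_pow, Real.sq_sqrt h1l.le]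
      field_simp
      ring

/-- quantitative one-step decrease
`V⁺ − V ≤ −(λ/(1−λ))(V − γ²‖ū‖²)` under the hypotheses of Theorem 1. -/
theorem stmt_10 {n nb m mb p : ℕ}
    (A_L : Matrix (Fin n) (Fin n) ℝ) (B_L : Matrix (Fin n) (Fin m) ℝ)
    (C : Matrix (Fin p) (Fin n) ℝ)
    (Ab_L : Matrix (Fin nb) (Fin nb) ℝ) (Bb_L : Matrix (Fin nb) (Fin mb) ℝ)
    (Cb : Matrix (Fin p) (Fin nb) ℝ)
    (M : Matrix (Fin n) (Fin n) ℝ) (hM : M.PosDef)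
    (K : Matrix (Fin m) (Fin n) ℝ) (l : ℝ) (hl0 : 0 < l) (hl : l < 1 / 2)
    (hcontr : ((-(2 * l)) • M -
      ((A_L + B_L * K)ᵀ * M * (A_L + B_L * K) - M)).PosSemidef)
    (hMC : (M - Cᵀ * C).PosSemidef)
    (P : Matrix (Fin n) (Fin nb) ℝ) (Q : Matrix (Fin m) (Fin nb) ℝ)
    (hCP : C * P = Cb) (hPA : P * Ab_L = A_L * P + B_L * Q)
    (R : Matrix (Fin m) (Fin mb) ℝ)
    (V : (Fin nb → ℝ) → (Fin n → ℝ) → ℝ)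
    (hV : ∀ xb x, V xb x = (x - P.mulVec xb) ⬝ᵥ M.mulVec (x - P.mulVec xb))
    (u_L : (Fin mb → ℝ) → (Fin nb → ℝ) → (Fin n → ℝ) → (Fin m → ℝ))
    (hu_L : ∀ ub xb x, u_L ub xb x =
      R.mulVec ub + Q.mulVec xb + K.mulVec (x - P.mulVec xb))
    (γ : ℝ)
    (hγ : γ = Real.sqrt (1 - l) / l * specNorm (posSemidefSqrt hM.posSemidef * (B_L * R - P * Bb_L))) :
    ∀ (xb : Fin nb → ℝ) (x : Fin n → ℝ) (ub : Fin mb → ℝ),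
      V (Ab_L.mulVec xb + Bb_L.mulVec ub)
          (A_L.mulVec x + B_L.mulVec (u_L ub xb x)) - V xb x ≤
        -(l / (1 - l)) * (V xb x - γ ^ 2 * eunorm ub ^ 2) :=
  stmt_10_general A_L B_L Ab_L Bb_L M hM K l hl0 hl hcontr P Q hPA R V hV u_L hu_L γ hγ
end

section
/- Let 𝒰 = {u ∈ ℝ^m : F_u u ≤ f_u} be a polyhedron with rows F_{u,j}. Suppose ū, x̄, and e satisfy for all j: F_{u,j} R ū ≤ f_{u,j} − δ‖F_{u,j}‖₁ − ε‖F_{u,j} K M^{-1/2}‖, with ‖Q x̄‖_∞ ≤ δ and ‖e‖ ≤ ε. Then R ū + Q x̄ + K M^{-1/2} e ∈ 𝒰. -/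
open Matrix

/-- The square root of a positive semidefinite matrix, as defined in Mathlib of December 2024
(removed since; reinstated here with its old definition). -/
noncomputable def Matrix.PosSemidef.sqrt {n : Type*} [Fintype n] [DecidableEq n]
    {A : Matrix n n ℝ} (hA : A.PosSemidef) : Matrix n n ℝ :=
  (hA.1.eigenvectorUnitary : Matrix n n ℝ) * diagonal ((√·) ∘ hA.1.eigenvalues) *
    (star (hA.1.eigenvectorUnitary : Matrix n n ℝ))

theorem dotProduct_le_mul_sum_abs {ι : Type*} [Fintype ι] {a v : ι → ℝ} {δ : ℝ}
    (hv : ∀ i, |v i| ≤ δ) : a ⬝ᵥ v ≤ δ * ∑ i, |a i| := by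
  rw [Finset.mul_sum]
  refine Finset.sum_le_sum fun i _ => ?_
  calc a i * v i ≤ |a i * v i| := le_abs_self _
    _ = |a i| * |v i| := abs_mul _ _
    _ ≤ δ * |a i| := by rw [mul_comm δ]; exact mul_le_mul_of_nonneg_left (hv i) (abs_nonneg _)

theorem dotProduct_le_eunorm_mul_eunorm {n : ℕ} (v w : Fin n → ℝ) :
    v ⬝ᵥ w ≤ eunorm v * eunorm w := by
  have h := real_inner_le_norm ((WithLp.equiv 2 (Fin n → ℝ)).symm v)
    ((WithLp.equiv 2 (Fin n → ℝ)).symm w)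
  rw [EuclideanSpace.inner_eq_star_dotProduct] at h
  simpa [dotProduct, mul_comm, eunorm] using h

theorem dotProduct_mulVec_le_of_eunorm_le {m n : ℕ} (a : Fin m → ℝ)
    (A : Matrix (Fin m) (Fin n) ℝ) {e : Fin n → ℝ} {ε : ℝ} (he : eunorm e ≤ ε) :
    a ⬝ᵥ A *ᵥ e ≤ ε * eunorm (a ᵥ* A) := by
  rw [dotProduct_mulVec, mul_comm ε]
  exact (dotProduct_le_eunorm_mul_eunorm _ _).trans
    (mul_le_mul_of_nonneg_left he (norm_nonneg _))

/-- tightened polyhedral input constraints guarantee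
`Rū + Qx̄ + KM^{-1/2}e ∈ 𝒰`. -/
theorem stmt_13 {m mb nb n du : ℕ}
    (F_u : Matrix (Fin du) (Fin m) ℝ) (f_u : Fin du → ℝ)
    (R : Matrix (Fin m) (Fin mb) ℝ) (Q : Matrix (Fin m) (Fin nb) ℝ)
    (K : Matrix (Fin m) (Fin n) ℝ)
    (M : Matrix (Fin n) (Fin n) ℝ) (hM : M.PosDef)
    (δ ε : ℝ)
    (ub : Fin mb → ℝ) (xb : Fin nb → ℝ) (e : Fin n → ℝ)
    (hu : ∀ j, F_u j ⬝ᵥ R.mulVec ub ≤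
      f_u j - δ * (∑ i, |F_u j i|) -
        ε * eunorm (Matrix.vecMul (F_u j) (K * (hM.posSemidef.sqrt)⁻¹)))
    (hx : ∀ i, |Q.mulVec xb i| ≤ δ)
    (he : eunorm e ≤ ε) :
    ∀ j, F_u j ⬝ᵥ (R.mulVec ub + Q.mulVec xb +
      (K * (hM.posSemidef.sqrt)⁻¹).mulVec e) ≤ f_u j := by
  intro j
  have hQ := dotProduct_le_mul_sum_abs (a := F_u j) hx
  have hK := dotProduct_mulVec_le_of_eunorm_le (F_u j) (K * (hM.posSemidef.sqrt)⁻¹) he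
  rw [dotProduct_add, dotProduct_add]
  linarith [hu j]
end
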